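/- arXiv:1805.12305 — 14 statements merged into one kernel-verified Lean document; each statement's English description precedes it below -/
import Mathlib

section
/- The shortest-path distance is the greatest fixed point of the Bellman–Ford pull operator below the initial state: if d : V → ℝ≥0∞ satisfies F d = d and d v ≤ d₀ v for every v, then d v ≤ dist v for every v; moreover dist v ≤ d₀ v for every v and F dist = dist. -/
open scoped ENNReal

/-- The shortest-path distance is the greatest fixed point of the Bellman–Ford
pull operator below the initial state. -/
theorem bellmanFord_dist_greatest_fixed
    {V : Type*} [Fintype V] (s : V) (w : V → V → ℝ≥0∞)
    (F : (V → ℝ≥0∞) → (V → ℝ≥0∞))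
    (hFs : ∀ d : V → ℝ≥0∞, F d s = 0)
    (hFne : ∀ (d : V → ℝ≥0∞) (v : V), v ≠ s → F d v = ⨅ u : V, (d u + w u v))
    (d₀ : V → ℝ≥0∞) (hd₀s : d₀ s = 0) (hd₀ : ∀ v : V, v ≠ s → d₀ v = ⊤)
    (dist : V → ℝ≥0∞)
    (hdist : ∀ v : V, dist v =
      ⨅ (k : ℕ) (x : Fin (k + 1) → V) (_ : x 0 = s) (_ : x (Fin.last k) = v),
        ∑ i : Fin k, w (x i.castSucc) (x i.succ)) :
    (∀ d : V → ℝ≥0∞, F d = d → (∀ v : V, d v ≤ d₀ v) → ∀ v : V, d v ≤ dist v) ∧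
      (∀ v : V, dist v ≤ d₀ v) ∧ F dist = dist := by
  have hdists : dist s = 0 := by
    refine le_antisymm ?_ zero_le
    rw [hdist s]
    refine iInf_le_of_le 0 (iInf_le_of_le (fun _ => s) (iInf_le_of_le rfl
      (iInf_le_of_le rfl ?_)))
    simp
  have hdist_le : ∀ (k : ℕ) (x : Fin (k+1) → V), x 0 = s →
      dist (x (Fin.last k)) ≤ ∑ i : Fin k, w (x i.castSucc) (x i.succ) := by
    intro k x h0
    rw [hdist]
    exact iInf_le_of_le k (iInf_le_of_le x (iInf_le_of_le h0 (iInf_le_of_le rfl le_rfl)))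
  have hdist_d0 : ∀ v, dist v ≤ d₀ v := by
    intro v
    by_cases hv : v = s
    · subst hv; rw [hdists, hd₀s]
    · rw [hd₀ v hv]; exact le_top
  refine ⟨?_, hdist_d0, ?_⟩
  · intro d hFd hd0 v
    have key : ∀ (k : ℕ) (x : Fin (k+1) → V), x 0 = s →
        d (x (Fin.last k)) ≤ ∑ i : Fin k, w (x i.castSucc) (x i.succ) := by
      intro k
      induction k with
      | zero =>
        intro x h0
        have hds : d s ≤ 0 := by rw [← hd₀s]; exact hd0 s
        have : x (Fin.last 0) = s := by
          have : Fin.last 0 = 0 := rfl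
          rw [this, h0]
        rw [this]
        simpa using hds
      | succ k ih =>
        intro x h0
        have hsum : ∑ i : Fin (k+1), w (x i.castSucc) (x i.succ)
            = (∑ i : Fin k, w ((x ∘ Fin.castSucc) i.castSucc) ((x ∘ Fin.castSucc) i.succ))
              + w (x (Fin.last k).castSucc) (x (Fin.last k).succ) := by
          rw [Fin.sum_univ_castSucc]
          simp [Function.comp, Fin.succ_castSucc, -Fin.castSucc_succ]
        have h0' : (x ∘ Fin.castSucc) 0 = s := by
          simpa [Function.comp] using h0
        have ih' : d (x (Fin.last k).castSucc)
            ≤ ∑ i : Fin k, w ((x ∘ Fin.castSucc) i.castSucc) ((x ∘ Fin.castSucc) i.succ) :=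
          ih (x ∘ Fin.castSucc) h0'
        have hsucc : (Fin.last k).succ = Fin.last (k+1) := Fin.succ_last k
        by_cases hvs : x (Fin.last (k+1)) = s
        · have : d (x (Fin.last (k+1))) ≤ 0 := by rw [hvs, ← hd₀s]; exact hd0 s
          exact this.trans zero_le
        · have h1 : d (x (Fin.last (k+1))) = ⨅ u, d u + w u (x (Fin.last (k+1))) := by
            conv_lhs => rw [← hFd]
            exact hFne d _ hvs
          have h2 : d (x (Fin.last (k+1)))
              ≤ d (x (Fin.last k).castSucc) + w (x (Fin.last k).castSucc) (x (Fin.last (k+1))) := by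
            rw [h1]; exact iInf_le _ _
          rw [hsum, hsucc]
          exact h2.trans (add_le_add ih' le_rfl)
    rw [hdist v]
    refine le_iInf fun k => le_iInf fun x => le_iInf fun h0 => le_iInf fun hl => ?_
    rw [← hl]; exact key k x h0
  · funext v
    by_cases hv : v = s
    · subst hv; rw [hFs, hdists]
    · rw [hFne dist v hv]
      refine le_antisymm ?_ ?_
      · conv_rhs => rw [hdist v]
        refine le_iInf fun k => le_iInf fun x => le_iInf fun h0 => le_iInf fun hl => ?_
        cases k with
        | zero =>
          exact absurd (by rw [← hl, show Fin.last 0 = 0 from rfl]; exact h0) hv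
        | succ m =>
          have h0' : (x ∘ Fin.castSucc) 0 = s := by simpa [Function.comp] using h0
          have hu : dist (x (Fin.last m).castSucc)
              ≤ ∑ i : Fin m, w ((x ∘ Fin.castSucc) i.castSucc) ((x ∘ Fin.castSucc) i.succ) :=
            hdist_le m (x ∘ Fin.castSucc) h0'
          have hsum : ∑ i : Fin (m+1), w (x i.castSucc) (x i.succ)
              = (∑ i : Fin m, w ((x ∘ Fin.castSucc) i.castSucc) ((x ∘ Fin.castSucc) i.succ))
                + w (x (Fin.last m).castSucc) (x (Fin.last m).succ) := by
            rw [Fin.sum_univ_castSucc]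
            simp [Function.comp, Fin.succ_castSucc, -Fin.castSucc_succ]
          have hlast : x (Fin.last m).succ = v := by rw [Fin.succ_last, hl]
          calc (⨅ u, dist u + w u v)
              ≤ dist (x (Fin.last m).castSucc) + w (x (Fin.last m).castSucc) v :=
                iInf_le _ _
            _ ≤ _ := by
                rw [hsum, ← hlast]
                exact add_le_add hu le_rfl
      · refine le_iInf fun u => ?_
        rw [hdist u, ENNReal.iInf_add]
        refine le_iInf fun k => ?_
        rw [ENNReal.iInf_add]
        refine le_iInf fun x => ?_
        rw [ENNReal.iInf_add]
        refine le_iInf fun h0 => ?_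
        rw [ENNReal.iInf_add]
        refine le_iInf fun hl => ?_
        have h0' : (Fin.snoc x v : Fin (k+2) → V) 0 = s := by
          have : (0 : Fin (k+2)) = Fin.castSucc 0 := rfl
          rw [this, Fin.snoc_castSucc, h0]
        have hl' : (Fin.snoc x v : Fin (k+2) → V) (Fin.last (k+1)) = v := Fin.snoc_last _ _
        have hsum : ∑ i : Fin (k+1), w ((Fin.snoc x v : Fin (k+2) → V) i.castSucc)
              ((Fin.snoc x v : Fin (k+2) → V) i.succ)
            = (∑ i : Fin k, w (x i.castSucc) (x i.succ)) + w u v := by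
          rw [Fin.sum_univ_castSucc]
          congr 1
          · refine Finset.sum_congr rfl fun i _ => ?_
            rw [Fin.succ_castSucc]
            simp [Fin.snoc_castSucc, -Fin.castSucc_succ]
          · rw [Fin.succ_last, Fin.snoc_last, Fin.snoc_castSucc, hl]
        rw [hdist v]
        refine iInf_le_of_le (k+1) (iInf_le_of_le (Fin.snoc x v) (iInf_le_of_le h0'
          (iInf_le_of_le hl' ?_)))
        rw [hsum]
end

section
/- The synchronous Bellman–Ford orbit is bounded below by the true shortest-path distances: for every t : ℕ and every v : V, dist v ≤ F^[t] d₀ v. -/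
open scoped ENNReal

/-- The synchronous Bellman–Ford orbit is bounded below by the true
shortest-path distances: `dist v ≤ F^[t] d₀ v` for every `t` and `v`. -/
theorem bellmanFord_orbit_ge_dist
    {V : Type*} [Fintype V] (s : V) (w : V → V → ℝ≥0∞)
    (F : (V → ℝ≥0∞) → (V → ℝ≥0∞))
    (hFs : ∀ d : V → ℝ≥0∞, F d s = 0)
    (hFne : ∀ (d : V → ℝ≥0∞) (v : V), v ≠ s → F d v = ⨅ u : V, (d u + w u v))
    (d₀ : V → ℝ≥0∞) (hd₀s : d₀ s = 0) (hd₀ : ∀ v : V, v ≠ s → d₀ v = ⊤)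
    (dist : V → ℝ≥0∞)
    (hdist : ∀ v : V, dist v =
      ⨅ (k : ℕ) (x : Fin (k + 1) → V) (_ : x 0 = s) (_ : x (Fin.last k) = v),
        ∑ i : Fin k, w (x i.castSucc) (x i.succ)) :
    ∀ (t : ℕ) (v : V), dist v ≤ F^[t] d₀ v := by
  -- dist s ≤ 0 via the empty walk
  have hds : dist s ≤ 0 := by
    rw [hdist s]
    refine le_trans (iInf_le _ 0) ?_
    refine le_trans (iInf_le _ (fun _ => s)) ?_
    simp
  -- triangle inequality
  have htri : ∀ u v : V, dist v ≤ dist u + w u v := by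
    intro u v
    rw [hdist u]
    simp only [ENNReal.iInf_add]
    refine le_iInf fun k => le_iInf fun x => le_iInf fun hx0 => le_iInf fun hxl => ?_
    rw [hdist v]
    refine le_trans (iInf_le _ (k + 1)) ?_
    refine le_trans (iInf_le _ (Fin.snoc x v)) ?_
    have h0 : (Fin.snoc x v : Fin (k + 2) → V) 0 = s := by
      have : (0 : Fin (k + 2)) = Fin.castSucc 0 := rfl
      rw [this, Fin.snoc_castSucc, hx0]
    refine le_trans (iInf_le _ h0) ?_
    refine le_trans (iInf_le _ (Fin.snoc_last _ _)) ?_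
    rw [Fin.sum_univ_castSucc]
    gcongr with i
    · rw [Fin.succ_castSucc, Fin.snoc_castSucc, Fin.snoc_castSucc]
    · rw [Fin.snoc_castSucc, Fin.succ_last, Fin.snoc_last, hxl]
  intro t
  induction t with
  | zero =>
    intro v
    by_cases hv : v = s
    · subst hv; simpa [hd₀s] using hds
    · simp [hd₀ v hv]
  | succ t ih =>
    intro v
    rw [Function.iterate_succ_apply']
    by_cases hv : v = s
    · subst hv; simpa [hFs] using hds
    · rw [hFne _ v hv]
      refine le_iInf fun u => ?_
      exact le_trans (htri u v) (add_le_add_left (ih u) _)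
end

section
/- For every t : ℕ and every v : V, the t-th synchronous Bellman–Ford iterate equals the length-bounded shortest distance: F^[t] d₀ v = the infimum, over all walks from s to v having at most t edges, of their weight. -/
open scoped ENNReal

/-- The `t`-th synchronous Bellman–Ford iterate equals the length-bounded
shortest distance: the infimum of the weights of walks from `s` to `v` with at
most `t` edges. -/
theorem bellmanFord_iterate_eq_bounded_dist
    {V : Type*} [Fintype V] (s : V) (w : V → V → ℝ≥0∞)
    (F : (V → ℝ≥0∞) → (V → ℝ≥0∞))
    (hFs : ∀ d : V → ℝ≥0∞, F d s = 0)
    (hFne : ∀ (d : V → ℝ≥0∞) (v : V), v ≠ s → F d v = ⨅ u : V, (d u + w u v))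
    (d₀ : V → ℝ≥0∞) (hd₀s : d₀ s = 0) (hd₀ : ∀ v : V, v ≠ s → d₀ v = ⊤) :
    ∀ (t : ℕ) (v : V), F^[t] d₀ v =
      ⨅ (k : ℕ) (_ : k ≤ t) (x : Fin (k + 1) → V) (_ : x 0 = s)
        (_ : x (Fin.last k) = v),
        ∑ i : Fin k, w (x i.castSucc) (x i.succ) := by
  intro t
  induction t with
  | zero =>
    intro v
    simp only [Function.iterate_zero, id_eq]
    by_cases hv : v = s
    · subst hv
      rw [hd₀s]
      refine le_antisymm zero_le ?_
      refine iInf_le_of_le 0 ?_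
      refine iInf_le_of_le le_rfl ?_
      refine iInf_le_of_le (fun _ : Fin 1 => v) ?_
      refine iInf_le_of_le rfl ?_
      refine iInf_le_of_le rfl ?_
      simp
    · rw [hd₀ v hv]
      refine le_antisymm ?_ le_top
      refine le_iInf fun k => le_iInf fun hk => le_iInf fun x => le_iInf fun h0 =>
        le_iInf fun hl => ?_
      interval_cases k
      exact absurd (h0.symm.trans hl) (Ne.symm hv)
  | succ t ih =>
    intro v
    rw [Function.iterate_succ_apply']
    by_cases hv : v = s
    · subst hv
      rw [hFs]
      refine le_antisymm zero_le ?_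
      refine iInf_le_of_le 0 ?_
      refine iInf_le_of_le (Nat.zero_le _) ?_
      refine iInf_le_of_le (fun _ : Fin 1 => v) ?_
      refine iInf_le_of_le rfl ?_
      refine iInf_le_of_le rfl ?_
      simp
    · rw [hFne _ v hv]
      simp only [ih]
      refine le_antisymm ?_ ?_
      · refine le_iInf fun k => le_iInf fun hk => le_iInf fun x => le_iInf fun h0 =>
          le_iInf fun hl => ?_
        cases k with
        | zero => exact absurd (h0.symm.trans hl) (Ne.symm hv)
        | succ k =>
          refine le_trans (iInf_le _ (x (Fin.castSucc (Fin.last k)))) ?_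
          rw [Fin.sum_univ_castSucc]
          have hlast : x (Fin.last k).succ = v := by rw [Fin.succ_last]; exact hl
          rw [hlast]
          gcongr
          refine iInf_le_of_le k ?_
          refine iInf_le_of_le (by omega) ?_
          refine iInf_le_of_le (fun i : Fin (k+1) => x (Fin.castSucc i)) ?_
          refine iInf_le_of_le (by simpa using h0) ?_
          refine iInf_le_of_le rfl ?_
          refine le_of_eq (Finset.sum_congr rfl fun i _ => ?_)
          simp only []
          rw [Fin.succ_castSucc]
      · refine le_iInf fun u => ?_
        simp only [ENNReal.iInf_add]
        refine le_iInf fun k => le_iInf fun hk => le_iInf fun x => le_iInf fun h0 =>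
          le_iInf fun hl => ?_
        have hy0 : (Fin.snoc x v : Fin (k+2) → V) 0 = s := by
          rw [show (0 : Fin (k+2)) = Fin.castSucc 0 by simp, Fin.snoc_castSucc]
          exact h0
        have hyl : (Fin.snoc x v : Fin (k+2) → V) (Fin.last (k+1)) = v := Fin.snoc_last _ _
        have hsum : (∑ i : Fin (k+1), w ((Fin.snoc x v : Fin (k+2) → V) i.castSucc) ((Fin.snoc x v : Fin (k+2) → V) i.succ))
            = (∑ i : Fin k, w (x i.castSucc) (x i.succ)) + w u v := by
          rw [Fin.sum_univ_castSucc]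
          congr 1
          · refine Finset.sum_congr rfl fun i _ => ?_
            rw [Fin.succ_castSucc, Fin.snoc_castSucc, Fin.snoc_castSucc]
          · rw [Fin.succ_last, Fin.snoc_last, Fin.snoc_castSucc, hl]
        refine iInf_le_of_le (k+1) ?_
        refine iInf_le_of_le (by omega) ?_
        refine iInf_le_of_le (Fin.snoc x v : Fin (k+2) → V) ?_
        refine iInf_le_of_le hy0 ?_
        refine iInf_le_of_le hyl ?_
        exact le_of_eq hsum
end

section
/- Walk shortening: for all a b : V, the infimum over all walks from a to b of their weight equals the infimum over all walks from a to b having fewer than Fintype.card V edges of their weight. -/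
open scoped ENNReal

private lemma cut_lemma {V : Type*} (w : V → V → ℝ≥0∞) (k i j : ℕ) (x : ℕ → V)
    (hij : i < j) (hjk : j ≤ k) (hx : x i = x j) :
    ∃ k' < k, ∃ x' : ℕ → V, x' 0 = x 0 ∧ x' k' = x k ∧
      ∑ t ∈ Finset.range k', w (x' t) (x' (t+1)) ≤
        ∑ t ∈ Finset.range k, w (x t) (x (t+1)) := by
  set d := j - i with hd
  have hd0 : 0 < d := by omega
  refine ⟨k - d, by omega, fun n => if n < i then x n else x (n + d), ?_, ?_, ?_⟩
  · by_cases h0 : 0 < i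
    · simp [h0]
    · have hi0 : i = 0 := by omega
      have : (0 : ℕ) + d = j := by omega
      simp only [if_neg (by omega : ¬ (0:ℕ) < i), this]
      rw [← hx, hi0]
  · have h1 : ¬ (k - d < i) := by omega
    have h2 : k - d + d = k := by omega
    simp [h1, h2]
  · set g : ℕ → ℕ := fun t => if t < i then t else t + d with hg
    have hginj : Function.Injective g := by
      intro a b hab
      simp only [hg] at hab
      split_ifs at hab <;> omega
    have hval : ∀ t ∈ Finset.range (k - d),
        w ((fun n => if n < i then x n else x (n + d)) t)
          ((fun n => if n < i then x n else x (n + d)) (t+1)) =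
        w (x (g t)) (x (g t + 1)) := by
      intro t ht
      simp only [Finset.mem_range] at ht
      by_cases h1 : t < i
      · by_cases h2 : t + 1 < i
        · simp [hg, h1, h2]
        · have hti : t + 1 = i := by omega
          have hiv : i + d = j := by omega
          simp only [hg, if_pos h1, hti, if_neg (lt_irrefl i), hiv, ← hx]
      · have h2 : ¬ (t + 1 < i) := by omega
        have h3 : t + 1 + d = t + d + 1 := by omega
        simp only [hg, if_neg h1, if_neg h2, h3]
    rw [Finset.sum_congr rfl hval]
    calc ∑ t ∈ Finset.range (k - d), w (x (g t)) (x (g t + 1))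
        = ∑ s ∈ (Finset.range (k - d)).image g, w (x s) (x (s + 1)) := by
          rw [Finset.sum_image (fun a _ b _ h => hginj h)]
      _ ≤ ∑ t ∈ Finset.range k, w (x t) (x (t+1)) := by
          apply Finset.sum_le_sum_of_subset
          intro s hs
          simp only [Finset.mem_image, Finset.mem_range] at hs ⊢
          obtain ⟨t, ht, rfl⟩ := hs
          simp only [hg]
          split_ifs <;> omega

private lemma shorten_lemma {V : Type*} [Fintype V] (w : V → V → ℝ≥0∞) :
    ∀ k (x : ℕ → V), ∃ m, m < Fintype.card V ∧ ∃ y : ℕ → V,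
      y 0 = x 0 ∧ y m = x k ∧
      ∑ t ∈ Finset.range m, w (y t) (y (t+1)) ≤
        ∑ t ∈ Finset.range k, w (x t) (x (t+1)) := by
  intro k
  induction k using Nat.strong_induction_on with
  | _ k ih =>
    intro x
    by_cases hk : k < Fintype.card V
    · exact ⟨k, hk, x, rfl, rfl, le_rfl⟩
    · push_neg at hk
      have hcard : Fintype.card V < Fintype.card (Fin (k+1)) := by
        simpa using Nat.lt_succ_of_le hk
      obtain ⟨i, j, hne, hij⟩ := Fintype.exists_ne_map_eq_of_card_lt
        (fun n : Fin (k+1) => x n) hcard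
      have hvne : (i : ℕ) ≠ (j : ℕ) := fun h => hne (Fin.ext h)
      rcases lt_or_gt_of_ne hvne with hlt | hlt
      · obtain ⟨k', hk', x', h0, hk'', hle⟩ :=
          cut_lemma w k i j x hlt (by omega) hij
        obtain ⟨m, hm, y, hy0, hym, hyle⟩ := ih k' hk' x'
        exact ⟨m, hm, y, hy0.trans h0, hym.trans hk'', hyle.trans hle⟩
      · obtain ⟨k', hk', x', h0, hk'', hle⟩ :=
          cut_lemma w k j i x hlt (by omega) hij.symm
        obtain ⟨m, hm, y, hy0, hym, hyle⟩ := ih k' hk' x'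
        exact ⟨m, hm, y, hy0.trans h0, hym.trans hk'', hyle.trans hle⟩

/-- Walk shortening: the infimum of walk weights from `a` to `b` equals the
infimum over walks with fewer than `Fintype.card V` edges. -/
theorem walk_shortening
    {V : Type*} [Fintype V] (w : V → V → ℝ≥0∞) :
    ∀ a b : V,
      (⨅ (k : ℕ) (x : Fin (k + 1) → V) (_ : x 0 = a) (_ : x (Fin.last k) = b),
        ∑ i : Fin k, w (x i.castSucc) (x i.succ)) =
      ⨅ (k : ℕ) (_ : k < Fintype.card V) (x : Fin (k + 1) → V) (_ : x 0 = a)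
        (_ : x (Fin.last k) = b),
        ∑ i : Fin k, w (x i.castSucc) (x i.succ) := by
  intro a b
  -- general lemma: the Fin-sum of a walk equals the range-sum of its ℕ extension
  have key : ∀ (k : ℕ) (x : Fin (k+1) → V),
      ∑ i : Fin k, w (x i.castSucc) (x i.succ) =
      ∑ t ∈ Finset.range k, w (x ⟨min t k, by omega⟩) (x ⟨min (t+1) k, by omega⟩) := by
    intro k x
    rw [← Fin.sum_univ_eq_sum_range]
    apply Finset.sum_congr rfl
    intro i _
    congr 1 <;> apply congrArg <;> apply Fin.ext <;> simp <;> omega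
  apply le_antisymm
  · refine le_iInf fun k => le_iInf fun hk => le_iInf fun x => le_iInf fun ha =>
      le_iInf fun hb => ?_
    exact iInf₂_le_of_le k x (iInf₂_le ha hb)
  · refine le_iInf fun k => le_iInf fun x => le_iInf fun ha => le_iInf fun hb => ?_
    set xt : ℕ → V := fun n => x ⟨min n k, by omega⟩ with hxt
    obtain ⟨m, hm, y, hy0, hym, hyle⟩ := shorten_lemma w k xt
    set z : Fin (m+1) → V := fun i => y i.val with hz
    have hz0 : z 0 = a := by
      simp only [hz, hxt] at *
      rw [show ((0 : Fin (m+1)) : ℕ) = 0 from rfl, hy0]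
      simpa using ha
    have hzm : z (Fin.last m) = b := by
      simp only [hz, hxt, Fin.val_last] at *
      rw [hym]
      simp
      exact hb
    have hsum : ∑ i : Fin m, w (z i.castSucc) (z i.succ) ≤
        ∑ i : Fin k, w (x i.castSucc) (x i.succ) := by
      rw [Fin.sum_univ_eq_sum_range (fun t => w (y t) (y (t+1))) m |>.symm] at hyle
      · calc ∑ i : Fin m, w (z i.castSucc) (z i.succ)
            = ∑ i : Fin m, w (y i) (y (i+1)) := by
              apply Finset.sum_congr rfl; intro i _; rfl
          _ ≤ ∑ t ∈ Finset.range k, w (xt t) (xt (t+1)) := hyle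
          _ = ∑ i : Fin k, w (x i.castSucc) (x i.succ) := (key k x).symm
    exact le_trans (iInf_le_of_le m <| iInf_le_of_le hm <| iInf_le_of_le z <|
      iInf_le_of_le hz0 <| iInf_le_of_le hzm le_rfl) hsum
end

section
/- Bellman–Ford correctness and stabilization: for every t ≥ Fintype.card V and every v : V, F^[t] d₀ v = dist v; in particular the synchronous orbit is eventually constant with limit dist. -/
open scoped ENNReal

namespace BFaux

noncomputable def cost {V : Type*} (w : V → V → ℝ≥0∞) (x : ℕ → V) (k : ℕ) : ℝ≥0∞ :=
  ∑ i ∈ Finset.range k, w (x i) (x (i + 1))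

lemma shorten {V : Type*} [Fintype V] (w : V → V → ℝ≥0∞) (k : ℕ) (x : ℕ → V) :
    ∃ m < Fintype.card V, ∃ y : ℕ → V,
      y 0 = x 0 ∧ y m = x k ∧ cost w y m ≤ cost w x k := by
  induction k using Nat.strong_induction_on generalizing x with
  | _ k IH =>
    by_cases hk : k < Fintype.card V
    · exact ⟨k, hk, x, rfl, rfl, le_rfl⟩
    · push_neg at hk
      have hcard : Fintype.card V < Fintype.card (Fin (k+1)) := by
        simp only [Fintype.card_fin]; omega
      obtain ⟨a, b, hab, hxab⟩ :=
        Fintype.exists_ne_map_eq_of_card_lt (fun i : Fin (k+1) => x i) hcard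
      have key : ∃ i j : ℕ, i < j ∧ j ≤ k ∧ x i = x j := by
        rcases Ne.lt_or_gt hab with h | h
        · exact ⟨a, b, h, Nat.lt_succ_iff.mp b.isLt, hxab⟩
        · exact ⟨b, a, h, Nat.lt_succ_iff.mp a.isLt, hxab.symm⟩
      obtain ⟨i, j, hij, hjk, hx⟩ := key
      set d := j - i with hd
      set m := k - d with hm
      have hd0 : 0 < d := by omega
      have hdk : d ≤ k := by omega
      have hmk : m < k := by omega
      have him : i ≤ m := by omega
      set z : ℕ → V := fun n => if n ≤ i then x n else x (n + d) with hz
      have hz' : ∀ n, i ≤ n → z n = x (n + d) := by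
        intro n hn
        rcases eq_or_lt_of_le hn with h | h
        · subst h
          simp only [hz, if_pos le_rfl]
          rw [hx]; congr 1; omega
        · simp only [hz]; rw [if_neg (by omega)]
      have hterm : ∀ n ∈ Finset.range m,
          w (x (if n < i then n else n + d)) (x ((if n < i then n else n + d) + 1))
            = w (z n) (z (n+1)) := by
        intro n hn
        simp only [Finset.mem_range] at hn
        by_cases h : n < i
        · rw [if_pos h]
          simp only [hz]
          rw [if_pos (by omega : n ≤ i), if_pos (by omega : n + 1 ≤ i)]
        · rw [if_neg h, hz' n (by omega), hz' (n+1) (by omega),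
            show n + d + 1 = n + 1 + d from by omega]
      have hinj : ∀ a ∈ Finset.range m, ∀ b ∈ Finset.range m,
          (if a < i then a else a + d) = (if b < i then b else b + d) → a = b := by
        intro a ha b hb hab
        split_ifs at hab <;> omega
      have hcosteq : cost w z m = ∑ n ∈ (Finset.range m).image
          (fun n => if n < i then n else n + d), w (x n) (x (n+1)) := by
        unfold cost
        rw [Finset.sum_image hinj]
        exact (Finset.sum_congr rfl hterm).symm
      have hsub : (Finset.range m).image (fun n => if n < i then n else n + d)
          ⊆ Finset.range k := by
        intro n hn
        simp only [Finset.mem_image, Finset.mem_range] at hn ⊢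
        obtain ⟨a, ha, rfl⟩ := hn
        split_ifs <;> omega
      have hcost : cost w z m ≤ cost w x k := by
        rw [hcosteq]
        exact Finset.sum_le_sum_of_subset hsub
      obtain ⟨m', hm', y, hy0, hym, hyc⟩ := IH m hmk z
      refine ⟨m', hm', y, ?_, ?_, hyc.trans hcost⟩
      · rw [hy0]; simp only [hz]; rw [if_pos (Nat.zero_le i)]
      · rw [hym, hz' m him]; congr 1; omega

end BFaux

/-- Bellman–Ford correctness and stabilization: for every `t ≥ Fintype.card V`
and every vertex `v`, `F^[t] d₀ v = dist v`; in particular the synchronous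
orbit is eventually constant with limit `dist`. -/
theorem bellmanFord_correct
    {V : Type*} [Fintype V] (s : V) (w : V → V → ℝ≥0∞)
    (F : (V → ℝ≥0∞) → (V → ℝ≥0∞))
    (hFs : ∀ d : V → ℝ≥0∞, F d s = 0)
    (hFne : ∀ (d : V → ℝ≥0∞) (v : V), v ≠ s → F d v = ⨅ u : V, (d u + w u v))
    (d₀ : V → ℝ≥0∞) (hd₀s : d₀ s = 0) (hd₀ : ∀ v : V, v ≠ s → d₀ v = ⊤)
    (dist : V → ℝ≥0∞)
    (hdist : ∀ v : V, dist v =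
      ⨅ (k : ℕ) (x : Fin (k + 1) → V) (_ : x 0 = s) (_ : x (Fin.last k) = v),
        ∑ i : Fin k, w (x i.castSucc) (x i.succ)) :
    ∀ t : ℕ, Fintype.card V ≤ t → ∀ v : V, F^[t] d₀ v = dist v := by
  classical
  set nd : V → ℝ≥0∞ := fun v =>
    ⨅ (k : ℕ) (x : ℕ → V) (_ : x 0 = s) (_ : x k = v), BFaux.cost w x k with hnd
  have nd_le : ∀ (v : V) (k : ℕ) (x : ℕ → V), x 0 = s → x k = v →
      nd v ≤ BFaux.cost w x k := by
    intro v k x h0 hk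
    exact iInf_le_of_le k (iInf_le_of_le x (iInf_le_of_le h0 (iInf_le _ hk)))
  -- dist = nd
  have dist_eq : ∀ v, dist v = nd v := by
    intro v
    rw [hdist]
    apply le_antisymm
    · refine le_iInf fun k => le_iInf fun x => le_iInf fun h0 => le_iInf fun hk => ?_
      refine iInf_le_of_le k (iInf_le_of_le (fun i => x i) (iInf_le_of_le ?_
        (iInf_le_of_le ?_ (le_of_eq ?_))))
      · simpa using h0
      · simpa using hk
      · unfold BFaux.cost
        rw [Finset.sum_range fun i => w (x i) (x (i+1))]
        apply Finset.sum_congr rfl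
        intro i _
        simp [Fin.coe_castSucc, Fin.val_succ]
    · refine le_iInf fun k => le_iInf fun x => le_iInf fun h0 => le_iInf fun hk => ?_
      set x' : ℕ → V := fun n => x ⟨min n k, by omega⟩ with hx'
      refine le_trans (nd_le v k x' ?_ ?_) (le_of_eq ?_)
      · simp only [hx']
        convert h0 using 2
        exact Fin.ext (by simp)
      · simp only [hx']
        rw [← hk]
        congr 1
        exact Fin.ext (by simp [Fin.val_last])
      · unfold BFaux.cost
        rw [Finset.sum_range fun i => w (x' i) (x' (i+1))]
        apply Finset.sum_congr rfl
        intro i _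
        have hi := i.isLt
        simp only [hx']
        congr 1
        · congr 1
          exact Fin.ext (by simp only [Fin.coe_castSucc]; omega)
        · congr 1
          exact Fin.ext (by simp only [Fin.val_succ]; omega)
  have nds : nd s ≤ 0 := by
    refine le_trans (nd_le s 0 (fun _ => s) rfl rfl) ?_
    simp [BFaux.cost]
  have tri : ∀ u v : V, nd v ≤ nd u + w u v := by
    intro u v
    have hrw : nd u + w u v = ⨅ (k : ℕ) (x : ℕ → V) (_ : x 0 = s) (_ : x k = u),
        (BFaux.cost w x k + w u v) := by
      simp only [hnd, ENNReal.iInf_add]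
    rw [hrw]
    refine le_iInf fun k => le_iInf fun x => le_iInf fun h0 => le_iInf fun hk => ?_
    refine le_trans (nd_le v (k+1) (fun n => if n ≤ k then x n else v) ?_ ?_)
      (le_of_eq ?_)
    · simp [h0]
    · simp
    · unfold BFaux.cost
      rw [Finset.sum_range_succ]
      congr 1
      · apply Finset.sum_congr rfl
        intro n hn
        simp only [Finset.mem_range] at hn
        show w (if n ≤ k then x n else v) (if n + 1 ≤ k then x (n+1) else v) = w (x n) (x (n+1))
        rw [if_pos (by omega : n ≤ k), if_pos (by omega : n + 1 ≤ k)]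
      · show w (if k ≤ k then x k else v) (if k + 1 ≤ k then x (k+1) else v) = w u v
        rw [if_pos le_rfl, if_neg (by omega), hk]
  have Fmono : Monotone F := by
    intro d d' h v
    by_cases hv : v = s
    · simp [hv, hFs]
    · rw [hFne _ _ hv, hFne _ _ hv]
      exact iInf_mono fun u => add_le_add_left (h u) _
  have anti : Antitone (fun t => F^[t] d₀) := by
    apply antitone_nat_of_succ_le
    intro t
    induction t with
    | zero =>
      intro v
      simp only [Function.iterate_one, Function.iterate_zero, id]
      by_cases hv : v = s
      · simp [hv, hFs, hd₀s]
      · rw [hd₀ v hv]; exact le_top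
    | succ t IH =>
      calc F^[t+1+1] d₀ = F (F^[t+1] d₀) := Function.iterate_succ_apply' F (t+1) d₀
        _ ≤ F (F^[t] d₀) := Fmono IH
        _ = F^[t+1] d₀ := (Function.iterate_succ_apply' F t d₀).symm
  have reach : ∀ (k : ℕ) (x : ℕ → V), x 0 = s → F^[k] d₀ (x k) ≤ BFaux.cost w x k := by
    intro k
    induction k with
    | zero => intro x h0; simp [h0, hd₀s, BFaux.cost]
    | succ k IH =>
      intro x h0
      rw [Function.iterate_succ_apply']
      by_cases hv : x (k+1) = s
      · rw [hv, hFs]; exact zero_le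
      · rw [hFne _ _ hv]
        refine le_trans (iInf_le _ (x k)) ?_
        unfold BFaux.cost
        rw [Finset.sum_range_succ]
        exact add_le_add_left (IH x h0) _
  have lower : ∀ (t : ℕ) (v : V), nd v ≤ F^[t] d₀ v := by
    intro t
    induction t with
    | zero =>
      intro v
      by_cases hv : v = s
      · simpa [hv, hd₀s] using nds
      · simp [hd₀ v hv]
    | succ t IH =>
      intro v
      rw [Function.iterate_succ_apply']
      by_cases hv : v = s
      · rw [hv, hFs]; simpa using nds
      · rw [hFne _ _ hv]
        exact le_iInf fun u => le_trans (tri u v) (add_le_add_left (IH u) _)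
  intro t ht v
  rw [dist_eq v]
  refine le_antisymm ?_ (lower t v)
  refine le_iInf fun k => le_iInf fun x => le_iInf fun h0 => le_iInf fun hk => ?_
  obtain ⟨m, hm, y, hy0, hym, hyc⟩ := BFaux.shorten w k x
  calc F^[t] d₀ v ≤ F^[m] d₀ v := anti (by omega : m ≤ t) v
    _ = F^[m] d₀ (y m) := by rw [hym, hk]
    _ ≤ BFaux.cost w y m := reach m y (hy0.trans h0)
    _ ≤ BFaux.cost w x k := hyc
end

section
/- Sandwich bound for the delayed SSSP iteration: for every t : ℕ and every v : V, F^[t] d₀ v ≤ g t v ≤ d₀ v. -/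
open scoped ENNReal

/-- Sandwich bound for the delayed SSSP iteration:
`F^[t] d₀ v ≤ g t v ≤ d₀ v` for every `t` and `v`. -/
theorem delayed_sssp_sandwich
    {V : Type*} [Fintype V] (s : V) (w : V → V → ℝ≥0∞)
    (F : (V → ℝ≥0∞) → (V → ℝ≥0∞))
    (hFs : ∀ d : V → ℝ≥0∞, F d s = 0)
    (hFne : ∀ (d : V → ℝ≥0∞) (v : V), v ≠ s → F d v = ⨅ u : V, (d u + w u v))
    (d₀ : V → ℝ≥0∞) (hd₀s : d₀ s = 0) (hd₀ : ∀ v : V, v ≠ s → d₀ v = ⊤)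
    (L : V → ℕ) (g : ℕ → V → ℝ≥0∞) (hg0 : g 0 = d₀)
    (hgF : ∀ (t : ℕ) (v : V), L v ≤ t → g (t + 1) v = F (g t) v)
    (hgW : ∀ (t : ℕ) (v : V), t < L v → g (t + 1) v = g t v) :
    ∀ (t : ℕ) (v : V), F^[t] d₀ v ≤ g t v ∧ g t v ≤ d₀ v := by
  have hmono : ∀ d d' : V → ℝ≥0∞, (∀ u, d u ≤ d' u) → ∀ v, F d v ≤ F d' v := by
    intro d d' h v
    by_cases hv : v = s
    · subst hv; simp [hFs]
    · rw [hFne d v hv, hFne d' v hv]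
      exact iInf_mono fun u => add_le_add_left (h u) _
  have hFle : ∀ d : V → ℝ≥0∞, ∀ v, F d v ≤ d₀ v := by
    intro d v
    by_cases hv : v = s
    · subst hv; simp [hFs, hd₀s]
    · rw [hd₀ v hv]; exact le_top
  have hiter : ∀ t v, F^[t + 1] d₀ v ≤ F^[t] d₀ v := by
    intro t
    induction t with
    | zero => intro v; simpa using hFle d₀ v
    | succ n ih =>
      intro v
      rw [Function.iterate_succ_apply']
      conv_rhs => rw [Function.iterate_succ_apply']
      exact hmono _ _ (fun u => by simpa [Function.iterate_succ_apply'] using ih u) v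
  intro t
  induction t with
  | zero => intro v; simp [hg0]
  | succ n ih =>
    intro v
    rcases le_or_gt (L v) n with h | h
    · rw [hgF n v h, Function.iterate_succ_apply']
      exact ⟨hmono _ _ (fun u => (ih u).1) v, hFle (g n) v⟩
    · rw [hgW n v h]
      exact ⟨le_trans (hiter n v) (ih v).1, (ih v).2⟩
end

section
/- The delayed SSSP iteration is pointwise antitone in time: for every t : ℕ and every v : V, g (t+1) v ≤ g t v. -/
open scoped ENNReal

/-- The delayed SSSP iteration is pointwise antitone in time:
`g (t+1) v ≤ g t v` for every `t` and `v`. -/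
theorem delayed_sssp_antitone
    {V : Type*} [Fintype V] (s : V) (w : V → V → ℝ≥0∞)
    (F : (V → ℝ≥0∞) → (V → ℝ≥0∞))
    (hFs : ∀ d : V → ℝ≥0∞, F d s = 0)
    (hFne : ∀ (d : V → ℝ≥0∞) (v : V), v ≠ s → F d v = ⨅ u : V, (d u + w u v))
    (d₀ : V → ℝ≥0∞) (hd₀s : d₀ s = 0) (hd₀ : ∀ v : V, v ≠ s → d₀ v = ⊤)
    (L : V → ℕ) (g : ℕ → V → ℝ≥0∞) (hg0 : g 0 = d₀)
    (hgF : ∀ (t : ℕ) (v : V), L v ≤ t → g (t + 1) v = F (g t) v)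
    (hgW : ∀ (t : ℕ) (v : V), t < L v → g (t + 1) v = g t v) :
    ∀ (t : ℕ) (v : V), g (t + 1) v ≤ g t v := by
  -- while waiting, the value stays at d₀
  have hwait : ∀ (t : ℕ) (v : V), t ≤ L v → g t v = d₀ v := by
    intro t
    induction t with
    | zero => intro v _; rw [hg0]
    | succ t ih =>
      intro v h
      rw [hgW t v (Nat.lt_of_succ_le h), ih v (Nat.le_of_succ_le h)]
  intro t
  induction t with
  | zero =>
    intro v
    rcases Nat.lt_or_ge 0 (L v) with h | h
    · rw [hgW 0 v h]
    · rw [hgF 0 v h, hg0]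
      by_cases hv : v = s
      · subst hv; rw [hFs, hd₀s]
      · rw [hd₀ v hv]; exact le_top
  | succ t ih =>
    intro v
    rcases Nat.lt_or_ge (t + 1) (L v) with h | h
    · rw [hgW (t + 1) v h]
    · rw [hgF (t + 1) v h]
      rcases Nat.lt_or_ge t (L v) with h2 | h2
      · -- L v = t + 1, so g (t+1) v = d₀ v
        rw [hwait (t + 1) v (by omega)]
        by_cases hv : v = s
        · subst hv; rw [hFs, hd₀s]
        · rw [hd₀ v hv]; exact le_top
      · rw [hgF t v h2]
        by_cases hv : v = s
        · subst hv; rw [hFs, hFs]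
        · rw [hFne _ v hv, hFne _ v hv]
          exact iInf_mono fun u => add_le_add_left (ih u) _
end

section
/- Theorem 1 (SSSP with delayed vertex computation converges to the original output): let T : ℕ satisfy L v ≤ T for every v : V. Then for every t ≥ T + Fintype.card V and every v : V, g t v = dist v; hence the delayed update procedure converges to the same values as the synchronous Bellman–Ford iteration. -/
open scoped ENNReal

/-- Theorem 1: SSSP with delayed vertex computation converges to the original
output. If every vertex's schedule is at most `T`, then for every
`t ≥ T + Fintype.card V` and every vertex `v`, `g t v = dist v`. -/
theorem delayed_sssp_converges
    {V : Type*} [Fintype V] (s : V) (w : V → V → ℝ≥0∞)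
    (F : (V → ℝ≥0∞) → (V → ℝ≥0∞))
    (hFs : ∀ d : V → ℝ≥0∞, F d s = 0)
    (hFne : ∀ (d : V → ℝ≥0∞) (v : V), v ≠ s → F d v = ⨅ u : V, (d u + w u v))
    (d₀ : V → ℝ≥0∞) (hd₀s : d₀ s = 0) (hd₀ : ∀ v : V, v ≠ s → d₀ v = ⊤)
    (dist : V → ℝ≥0∞)
    (hdist : ∀ v : V, dist v =
      ⨅ (k : ℕ) (x : Fin (k + 1) → V) (_ : x 0 = s) (_ : x (Fin.last k) = v),
        ∑ i : Fin k, w (x i.castSucc) (x i.succ))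
    (L : V → ℕ) (T : ℕ) (hL : ∀ v : V, L v ≤ T)
    (g : ℕ → V → ℝ≥0∞) (hg0 : g 0 = d₀)
    (hgF : ∀ (t : ℕ) (v : V), L v ≤ t → g (t + 1) v = F (g t) v)
    (hgW : ∀ (t : ℕ) (v : V), t < L v → g (t + 1) v = g t v) :
    ∀ t : ℕ, T + Fintype.card V ≤ t → ∀ v : V, g t v = dist v := by
  have hn1 : 1 ≤ Fintype.card V := Fintype.card_pos_iff.mpr ⟨s⟩
  -- g is always 0 at the source
  have gs : ∀ t, g t s = 0 := by
    intro t
    induction t with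
    | zero => rw [hg0, hd₀s]
    | succ t ih =>
      by_cases h : L s ≤ t
      · rw [hgF t s h, hFs]
      · rw [hgW t s (not_le.mp h), ih]
  -- dist s = 0
  have hdists : dist s = 0 := by
    refine le_antisymm ?_ zero_le
    rw [hdist s]
    refine iInf_le_of_le 0 (iInf_le_of_le (fun _ => s) ?_)
    simp
  -- triangle inequality
  have htri : ∀ u v : V, dist v ≤ dist u + w u v := by
    intro u v
    rw [hdist u]
    simp only [ENNReal.iInf_add]
    refine le_iInf fun k => le_iInf fun x => le_iInf fun hx0 => le_iInf fun hxl => ?_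
    rw [hdist v]
    refine iInf_le_of_le (k + 1) (iInf_le_of_le (Fin.snoc x v) ?_)
    have h0 : (Fin.snoc x v : Fin (k + 2) → V) 0 = s := by
      rw [show (0 : Fin (k + 2)) = Fin.castSucc 0 by simp, Fin.snoc_castSucc, hx0]
    have hl : (Fin.snoc x v : Fin (k + 2) → V) (Fin.last (k + 1)) = v := Fin.snoc_last ..
    refine iInf_le_of_le h0 (iInf_le_of_le hl (le_of_eq ?_))
    rw [Fin.sum_univ_castSucc]
    congr 1
    · refine Finset.sum_congr rfl fun i _ => ?_
      rw [Fin.snoc_castSucc, Fin.succ_castSucc, Fin.snoc_castSucc]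
    · rw [Fin.snoc_castSucc, show (Fin.last k).succ = Fin.last (k + 1) from rfl,
        Fin.snoc_last, hxl]
  -- lower bound: dist v ≤ g t v
  have LB : ∀ t v, dist v ≤ g t v := by
    intro t
    induction t with
    | zero =>
      intro v
      rw [hg0]
      by_cases h : v = s
      · subst h; rw [hd₀s, hdists]
      · rw [hd₀ v h]; exact le_top
    | succ t ih =>
      intro v
      by_cases h : L v ≤ t
      · rw [hgF t v h]
        by_cases hv : v = s
        · subst hv; rw [hFs, hdists]
        · rw [hFne _ v hv]
          exact le_iInf fun u => (htri u v).trans (add_le_add (ih u) le_rfl)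
      · rw [hgW t v (not_le.mp h)]; exact ih v
  -- walk upper bound on g
  have W : ∀ (k t : ℕ) (v : V) (x : Fin (k + 1) → V), T + k ≤ t → x 0 = s →
      x (Fin.last k) = v → g t v ≤ ∑ i : Fin k, w (x i.castSucc) (x i.succ) := by
    intro k
    induction k with
    | zero =>
      intro t v x _ hx0 hxl
      have : v = s := by rw [← hxl, show Fin.last 0 = 0 from rfl, hx0]
      subst this
      simp [gs t]
    | succ k ih =>
      intro t v x ht hx0 hxl
      obtain ⟨t', rfl⟩ : ∃ t', t = t' + 1 := ⟨t - 1, by omega⟩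
      by_cases hv : v = s
      · subst hv; rw [gs]; exact zero_le
      · have hLt : L v ≤ t' := le_trans (hL v) (by omega)
        rw [hgF t' v hLt, hFne _ v hv]
        set u := x ((Fin.last k).castSucc) with hu
        refine (iInf_le _ u).trans ?_
        rw [Fin.sum_univ_castSucc]
        refine add_le_add ?_ ?_
        · have h0 : (x ∘ Fin.castSucc) 0 = s := by
            simp only [Function.comp_apply]
            rw [show Fin.castSucc (0 : Fin (k + 1)) = 0 by simp, hx0]
          have := ih t' u (x ∘ Fin.castSucc) (by omega) h0 rfl
          refine this.trans (le_of_eq (Finset.sum_congr rfl fun i _ => ?_))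
          simp only [Function.comp_apply]
          rw [Fin.succ_castSucc]
        · rw [show (Fin.last k).succ = Fin.last (k + 1) from rfl, hxl]
  -- splicing: every walk dominates a short walk
  have splice : ∀ (v : V) (k : ℕ) (x : Fin (k + 1) → V), x 0 = s → x (Fin.last k) = v →
      ∃ (k' : ℕ) (y : Fin (k' + 1) → V), k' < Fintype.card V ∧ y 0 = s ∧
        y (Fin.last k') = v ∧
        ∑ i : Fin k', w (y i.castSucc) (y i.succ) ≤ ∑ i : Fin k, w (x i.castSucc) (x i.succ) := by
    intro v k
    induction k using Nat.strong_induction_on with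
    | _ k IH =>
      intro x hx0 hxl
      by_cases hk : k < Fintype.card V
      · exact ⟨k, x, hk, hx0, hxl, le_rfl⟩
      · push_neg at hk
        have hcard : Fintype.card V < Fintype.card (Fin (k + 1)) := by simp; omega
        obtain ⟨a, b, hab, hxab⟩ := Fintype.exists_ne_map_eq_of_card_lt x hcard
        obtain ⟨i, j, hij, hxij⟩ : ∃ i j : Fin (k + 1), i < j ∧ x i = x j := by
          rcases lt_or_gt_of_ne hab with h | h
          · exact ⟨a, b, h, hxab⟩
          · exact ⟨b, a, h, hxab.symm⟩
        have hik : (i : ℕ) < (j : ℕ) := hij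
        have hjk : (j : ℕ) ≤ k := by omega
        set d : ℕ := (j : ℕ) - (i : ℕ) with hd
        have hd0 : 0 < d := by omega
        have hdk : d ≤ k := by omega
        have hidj : (i : ℕ) + d = (j : ℕ) := by omega
        set k' : ℕ := k - d with hk'
        have hik' : (i : ℕ) ≤ k' := by omega
        set e : Fin (k' + 1) → Fin (k + 1) := fun m =>
          ⟨if (m : ℕ) ≤ (i : ℕ) then (m : ℕ) else (m : ℕ) + d, by split <;> omega⟩ with he
        have hval_e : ∀ a : Fin (k' + 1),
            ((e a : Fin (k + 1)) : ℕ) = if (a : ℕ) ≤ (i : ℕ) then (a : ℕ) else (a : ℕ) + d :=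
          fun a => rfl
        set y : Fin (k' + 1) → V := x ∘ e with hy
        have hy0 : y 0 = s := by
          have e0 : e 0 = 0 := Fin.ext (by simp [hval_e])
          show x (e 0) = s
          rw [e0, hx0]
        have hyl : y (Fin.last k') = v := by
          show x (e (Fin.last k')) = v
          by_cases h : k' ≤ (i : ℕ)
          · have hki : k' = (i : ℕ) := by omega
            have hjk2 : (j : ℕ) = k := by omega
            have e1 : e (Fin.last k') = i := Fin.ext (by
              simp only [hval_e, Fin.val_last]; split_ifs <;> omega)
            rw [e1, hxij, show j = Fin.last k from Fin.ext (by simp [hjk2]), hxl]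
          · have e1 : e (Fin.last k') = Fin.last k := Fin.ext (by
              simp only [hval_e, Fin.val_last]; split_ifs <;> omega)
            rw [e1, hxl]
        have hsum : ∑ m : Fin k', w (y m.castSucc) (y m.succ) ≤
            ∑ m : Fin k, w (x m.castSucc) (x m.succ) := by
          set φ : Fin k' → Fin k := fun m =>
            ⟨if (m : ℕ) < (i : ℕ) then (m : ℕ) else (m : ℕ) + d, by split <;> omega⟩ with hφ
          have hval_φ : ∀ m : Fin k',
              ((φ m : Fin k) : ℕ) = if (m : ℕ) < (i : ℕ) then (m : ℕ) else (m : ℕ) + d :=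
            fun m => rfl
          have hφinj : Function.Injective φ := by
            intro a b hab2
            have h2 := congrArg Fin.val hab2
            rw [hval_φ, hval_φ] at h2
            apply Fin.ext
            split_ifs at h2 <;> omega
          have hedge : ∀ m : Fin k', w (y m.castSucc) (y m.succ) =
              w (x (φ m).castSucc) (x (φ m).succ) := by
            intro m
            have hs2 : x (e m.succ) = x ((φ m).succ) := by
              apply congrArg x; apply Fin.ext
              simp only [hval_e, hval_φ, Fin.val_succ]
              split_ifs <;> omega
            have hc2 : x (e m.castSucc) = x ((φ m).castSucc) := by
              rcases lt_trichotomy ((m : ℕ)) ((i : ℕ)) with h1 | h1 | h1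
              · apply congrArg x; apply Fin.ext
                simp only [hval_e, hval_φ, Fin.coe_castSucc]
                split_ifs <;> omega
              · have e1 : e m.castSucc = i := Fin.ext (by
                  simp only [hval_e, Fin.coe_castSucc]; split_ifs <;> omega)
                have e2 : (φ m).castSucc = j := Fin.ext (by
                  simp only [hval_φ, Fin.coe_castSucc]; split_ifs <;> omega)
                rw [e1, e2, hxij]
              · apply congrArg x; apply Fin.ext
                simp only [hval_e, hval_φ, Fin.coe_castSucc]
                split_ifs <;> omega
            show w (x (e m.castSucc)) (x (e m.succ)) = _
            rw [hc2, hs2]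
          calc ∑ m : Fin k', w (y m.castSucc) (y m.succ)
              = ∑ m : Fin k', w (x (φ m).castSucc) (x (φ m).succ) :=
                Finset.sum_congr rfl fun m _ => hedge m
            _ = ∑ m ∈ Finset.univ.image φ, w (x m.castSucc) (x m.succ) :=
                (Finset.sum_image (g := φ) (f := fun m => w (x m.castSucc) (x m.succ))
                  (fun a _ b _ h => hφinj h)).symm
            _ ≤ ∑ m : Fin k, w (x m.castSucc) (x m.succ) :=
                Finset.sum_le_sum_of_subset (Finset.subset_univ _)
        have hk'lt : k' < k := by omega
        obtain ⟨k'', z, hk'', hz0, hzl, hzle⟩ := IH k' hk'lt y hy0 hyl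
        exact ⟨k'', z, hk'', hz0, hzl, hzle.trans hsum⟩
  -- conclusion
  intro t ht v
  refine le_antisymm ?_ (LB t v)
  rw [hdist v]
  refine le_iInf fun k => le_iInf fun x => le_iInf fun hx0 => le_iInf fun hxl => ?_
  obtain ⟨k', y, hk', hy0, hyl, hle⟩ := splice v k x hx0 hxl
  exact (W k' t v y (by omega) hy0 hyl).trans hle
end

section
/- General delayed-update sandwich (descending case): let ι be a type, α a complete lattice, d₀ : ι → α, and F : (ι → α) → (ι → α) monotone with respect to the pointwise order, with F d₀ ≤ d₀ pointwise. Let L : ι → ℕ and define the delayed iteration g 0 = d₀, g (t+1) i = F (g t) i if t ≥ L i and g (t+1) i = g t i otherwise. Then for every t : ℕ, F^[t] d₀ ≤ g t ≤ d₀ pointwise. -/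
/-- General delayed-update sandwich (descending case): for a monotone operator
`F` with `F d₀ ≤ d₀`, the delayed iteration is sandwiched between the
synchronous orbit and the initial state: `F^[t] d₀ ≤ g t ≤ d₀`. -/
theorem delayed_update_sandwich_of_descending
    {ι : Type*} {α : Type*} [CompleteLattice α]
    (d₀ : ι → α) (F : (ι → α) → (ι → α)) (hF : Monotone F)
    (hFd₀ : F d₀ ≤ d₀)
    (L : ι → ℕ)
    (g : ℕ → ι → α) (hg0 : g 0 = d₀)
    (hgF : ∀ (t : ℕ) (i : ι), L i ≤ t → g (t + 1) i = F (g t) i)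
    (hgW : ∀ (t : ℕ) (i : ι), t < L i → g (t + 1) i = g t i) :
    ∀ t : ℕ, F^[t] d₀ ≤ g t ∧ g t ≤ d₀ := by
  have hdec : ∀ t : ℕ, F^[t + 1] d₀ ≤ F^[t] d₀ := by
    intro t
    rw [Function.iterate_succ_apply]
    exact hF.iterate t hFd₀
  intro t
  induction t with
  | zero => simp [hg0]
  | succ t ih =>
    obtain ⟨hlo, hhi⟩ := ih
    constructor
    · intro i
      rcases le_or_gt (L i) t with h | h
      · rw [hgF t i h, Function.iterate_succ_apply']
        exact hF hlo i
      · rw [hgW t i h]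
        exact le_trans (hdec t i) (hlo i)
    · intro i
      rcases le_or_gt (L i) t with h | h
      · rw [hgF t i h]
        exact le_trans (hF hhi i) (hFd₀ i)
      · rw [hgW t i h]
        exact hhi i
end

section
/- General delayed-update convergence (ascending case, covering max-aggregation applications such as widest path): let ι be a type, α a complete lattice, d₀ : ι → α, and F : (ι → α) → (ι → α) monotone with respect to the pointwise order, with d₀ ≤ F d₀ pointwise. Suppose there are d* : ι → α and N : ℕ such that F^[k] d₀ = d* for every k ≥ N. Let L : ι → ℕ and T : ℕ with L i ≤ T for every i, and define the delayed iteration g 0 = d₀, g (t+1) i = F (g t) i if t ≥ L i and g (t+1) i = g t i otherwise. Then g t = d* for every t ≥ T + N. -/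
/-- General delayed-update convergence (ascending case, covering
max-aggregation applications such as widest path): a monotone operator whose
synchronous orbit from `d₀` ascends and stabilizes at `d*` after `N` steps
also stabilizes at `d*` under any delayed schedule bounded by `T`, after
`T + N` steps. -/
theorem delayed_update_converges_of_ascending
    {ι : Type*} {α : Type*} [CompleteLattice α]
    (d₀ : ι → α) (F : (ι → α) → (ι → α)) (hF : Monotone F)
    (hFd₀ : d₀ ≤ F d₀)
    (dstar : ι → α) (N : ℕ) (hfix : ∀ k : ℕ, N ≤ k → F^[k] d₀ = dstar)
    (L : ι → ℕ) (T : ℕ) (hL : ∀ i : ι, L i ≤ T)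
    (g : ℕ → ι → α) (hg0 : g 0 = d₀)
    (hgF : ∀ (t : ℕ) (i : ι), L i ≤ t → g (t + 1) i = F (g t) i)
    (hgW : ∀ (t : ℕ) (i : ι), t < L i → g (t + 1) i = g t i) :
    ∀ t : ℕ, T + N ≤ t → g t = dstar := by
  -- the synchronous orbit is monotone in k
  have hchain : Monotone fun k : ℕ => F^[k] d₀ := by
    apply monotone_nat_of_le_succ
    intro k
    rw [Function.iterate_succ_apply]
    exact hF.iterate k hFd₀
  -- dstar is a fixed point
  have hfixN : F^[N] d₀ = dstar := hfix N le_rfl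
  have hfp : F dstar = dstar := by
    have := hfix (N + 1) (Nat.le_succ N)
    rwa [Function.iterate_succ_apply', hfixN] at this
  -- upper bound: g t ≤ dstar
  have hub : ∀ t, g t ≤ dstar := by
    intro t
    induction t with
    | zero =>
        rw [hg0, ← hfixN]
        simpa using hchain (Nat.zero_le N)
    | succ t ih =>
        intro i
        rcases le_or_gt (L i) t with h | h
        · rw [hgF t i h, ← hfp]
          exact hF ih i
        · rw [hgW t i h]
          exact ih i
  -- lower bound: F^[t - T] d₀ ≤ g t
  have hlb : ∀ t, F^[t - T] d₀ ≤ g t := by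
    intro t
    induction t with
    | zero => simp [hg0]
    | succ t ih =>
        intro i
        rcases le_or_gt (L i) t with h | h
        · rw [hgF t i h]
          calc F^[t + 1 - T] d₀ i ≤ F^[t - T + 1] d₀ i := by
                exact hchain (by omega) i
            _ = F (F^[t - T] d₀) i := by rw [Function.iterate_succ_apply']
            _ ≤ F (g t) i := hF ih i
        · rw [hgW t i h]
          have ht : t + 1 - T = 0 := by have := hL i; omega
          rw [ht]
          calc d₀ i = F^[0] d₀ i := rfl
            _ ≤ F^[t - T] d₀ i := hchain (Nat.zero_le _) i
            _ ≤ g t i := ih i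
  intro t ht
  refine le_antisymm (hub t) ?_
  rw [← hfix (t - T) (by omega)]
  exact hlb t
end

section
/- Start-late correctness of a single full pull (unit weights): let v : V with v ≠ s, and let t : ℕ be such that hdist u ≤ t for every u : V with E u v and hdist u < ⊤. Then ⨅ (u : V), (F^[t] d₀ u + w u v) = hdist v; i.e., skipping all computation at v and performing one full pull after all of v's reachable in-neighbors have reached their final values yields v's correct final value. -/
/-- Start-late correctness of a single full pull (unit weights): if all of
`v`'s reachable in-neighbors have reached their final hop distances by time
`t`, then a single pull at `v` from the `t`-th iterate yields `v`'s correct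
final value `hdist v`. -/
theorem start_late_single_pull_correct
    {V : Type*} [Fintype V] (s : V) (E : V → V → Prop)
    (w : V → V → ℕ∞)
    (hw1 : ∀ u v : V, E u v → w u v = 1)
    (hwtop : ∀ u v : V, ¬ E u v → w u v = ⊤)
    (hdist : V → ℕ∞)
    (hhdist : ∀ v : V, hdist v =
      ⨅ (k : ℕ) (x : Fin (k + 1) → V) (_ : x 0 = s) (_ : x (Fin.last k) = v)
        (_ : ∀ i : Fin k, E (x i.castSucc) (x i.succ)), (k : ℕ∞))
    (F : (V → ℕ∞) → (V → ℕ∞))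
    (hFs : ∀ d : V → ℕ∞, F d s = 0)
    (hFne : ∀ (d : V → ℕ∞) (v : V), v ≠ s → F d v = ⨅ u : V, (d u + w u v))
    (d₀ : V → ℕ∞) (hd₀s : d₀ s = 0) (hd₀ : ∀ v : V, v ≠ s → d₀ v = ⊤)
    (v : V) (hv : v ≠ s) (t : ℕ)
    (ht : ∀ u : V, E u v → hdist u < ⊤ → hdist u ≤ (t : ℕ∞)) :
    (⨅ u : V, (F^[t] d₀ u + w u v)) = hdist v := by
  -- any walk gives an upper bound on hdist
  have walk_le : ∀ (u : V) (k : ℕ) (x : Fin (k + 1) → V), x 0 = s →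
      x (Fin.last k) = u → (∀ i : Fin k, E (x i.castSucc) (x i.succ)) →
      hdist u ≤ (k : ℕ∞) := by
    intro u k x h0 hl he
    rw [hhdist]
    exact iInf_le_of_le k (iInf_le_of_le x (iInf_le_of_le h0
      (iInf_le_of_le hl (iInf_le _ he))))
  have hds : hdist s ≤ 0 := by
    have := walk_le s 0 (fun _ => s) rfl rfl (by intro i; exact i.elim0)
    simpa using this
  -- attainment of finite hdist
  have attain : ∀ (u : V) (n : ℕ), hdist u = (n : ℕ∞) →
      ∃ k ≤ n, ∃ x : Fin (k + 1) → V, x 0 = s ∧ x (Fin.last k) = u ∧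
        ∀ i : Fin k, E (x i.castSucc) (x i.succ) := by
    intro u n hn
    have h : hdist u < (n : ℕ∞) + 1 := by
      rw [hn]
      exact_mod_cast Nat.lt_succ_self n
    rw [hhdist] at h
    simp only [iInf_lt_iff] at h
    obtain ⟨k, x, h0, hl, he, hk⟩ := h
    have hkn : k ≤ n := by exact_mod_cast Nat.lt_succ_iff.mp (by exact_mod_cast hk)
    exact ⟨k, hkn, x, h0, hl, he⟩
  -- relaxation inequality along an edge
  have relax : ∀ p u : V, E p u → hdist u ≤ hdist p + 1 := by
    intro p u hpu
    rcases eq_or_ne (hdist p) ⊤ with hp | hp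
    · simp [hp]
    · lift hdist p to ℕ using hp with n hn
      obtain ⟨k, hkn, x, h0, hl, he⟩ := attain p n hn.symm
      have : hdist u ≤ ((k + 1 : ℕ) : ℕ∞) := by
        refine walk_le u (k + 1) (Fin.snoc x u) ?_ ?_ ?_
        · have : (0 : Fin (k + 2)) = (0 : Fin (k + 1)).castSucc := by
            simp
          rw [this, Fin.snoc_castSucc, h0]
        · simp [Fin.snoc_last]
        · intro i
          refine Fin.lastCases ?_ ?_ i
          · have h1 : (Fin.last k).castSucc = (Fin.last k).castSucc := rfl
            rw [Fin.snoc_castSucc, Fin.succ_last, Fin.snoc_last, hl]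
            exact hpu
          · intro j
            rw [Fin.succ_castSucc, Fin.snoc_castSucc, Fin.snoc_castSucc]
            exact he j
      calc hdist u ≤ ((k + 1 : ℕ) : ℕ∞) := this
        _ ≤ ((n + 1 : ℕ) : ℕ∞) := by exact_mod_cast Nat.succ_le_succ hkn
        _ = (n : ℕ∞) + 1 := by push_cast; ring
  -- lower bound: hdist ≤ F^[t] d₀
  have lowb : ∀ (m : ℕ) (u : V), hdist u ≤ F^[m] d₀ u := by
    intro m
    induction m with
    | zero =>
      intro u
      rcases eq_or_ne u s with rfl | hu
      · simpa [hd₀s] using hds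
      · simp [hd₀ u hu]
    | succ m ih =>
      intro u
      rw [Function.iterate_succ_apply']
      rcases eq_or_ne u s with rfl | hu
      · simpa [hFs] using hds
      · rw [hFne _ u hu]
        refine le_iInf fun p => ?_
        by_cases hpu : E p u
        · rw [hw1 p u hpu]
          exact le_trans (relax p u hpu) (add_le_add_left (ih p) 1)
        · simp [hwtop p u hpu]
  -- upper bound: walks of length ≤ t bound F^[t] d₀
  have upb : ∀ (m : ℕ) (k : ℕ), k ≤ m → ∀ (u : V) (x : Fin (k + 1) → V),
      x 0 = s → x (Fin.last k) = u → (∀ i : Fin k, E (x i.castSucc) (x i.succ)) →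
      F^[m] d₀ u ≤ (k : ℕ∞) := by
    intro m
    induction m with
    | zero =>
      intro k hk u x h0 hl he
      interval_cases k
      have : u = s := by rw [← hl, ← h0]; rfl
      simp [this, hd₀s]
    | succ m ih =>
      intro k hk u x h0 hl he
      rw [Function.iterate_succ_apply']
      rcases eq_or_ne u s with rfl | hu
      · simp [hFs]
      · rcases k with _ | j
        · exact absurd (by rw [← hl, ← h0]; rfl) hu
        · rw [hFne _ u hu]
          set p := x (Fin.last j).castSucc with hp
          have hEpu : E p u := by
            have := he (Fin.last j)
            rwa [Fin.succ_last, hl] at this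
          have hyp : F^[m] d₀ p ≤ (j : ℕ∞) := by
            refine ih j (Nat.lt_succ_iff.mp hk) p (fun i => x i.castSucc) ?_ rfl ?_
            · simpa using h0
            · intro i
              have := he i.castSucc
              simpa only [Fin.succ_castSucc] using this
          refine le_trans (iInf_le _ p) ?_
          rw [hw1 p u hEpu]
          calc F^[m] d₀ p + 1 ≤ (j : ℕ∞) + 1 := add_le_add_left hyp 1
            _ = ((j + 1 : ℕ) : ℕ∞) := by push_cast; ring
  -- if hdist p ≤ t then F^[t] d₀ p = hdist p (≤ direction used)
  have conv : ∀ p : V, hdist p ≤ (t : ℕ∞) → F^[t] d₀ p ≤ hdist p := by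
    intro p hpt
    have hlt : hdist p ≠ ⊤ := ne_top_of_le_ne_top (by simp) hpt
    lift hdist p to ℕ using hlt with n hn
    obtain ⟨k, hkn, x, h0, hl, he⟩ := attain p n hn.symm
    have hkt : k ≤ t := by
      have : (n : ℕ∞) ≤ (t : ℕ∞) := hpt
      exact le_trans hkn (by exact_mod_cast this)
    calc F^[t] d₀ p ≤ (k : ℕ∞) := upb t k hkt p x h0 hl he
      _ ≤ (n : ℕ∞) := by exact_mod_cast hkn
  -- main proof
  apply le_antisymm
  · -- LHS ≤ hdist v
    rcases eq_or_ne (hdist v) ⊤ with hvt | hvt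
    · simp [hvt]
    · lift hdist v to ℕ using hvt with n hn
      obtain ⟨k, hkn, x, h0, hl, he⟩ := attain v n hn.symm
      rcases k with _ | j
      · exact absurd (by rw [← hl, ← h0]; rfl) hv
      · set p := x (Fin.last j).castSucc with hp
        have hEpv : E p v := by
          have := he (Fin.last j)
          rwa [Fin.succ_last, hl] at this
        have hdp : hdist p ≤ (j : ℕ∞) := by
          refine walk_le p j (fun i => x i.castSucc) ?_ rfl ?_
          · simpa using h0
          · intro i
            have := he i.castSucc
            simpa only [Fin.succ_castSucc] using this
        have hdpfin : hdist p < ⊤ := lt_of_le_of_lt hdp (by simp)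
        have hdpt : hdist p ≤ (t : ℕ∞) := ht p hEpv hdpfin
        calc (⨅ u : V, (F^[t] d₀ u + w u v)) ≤ F^[t] d₀ p + w p v := iInf_le _ p
          _ ≤ hdist p + 1 := by rw [hw1 p v hEpv]; exact add_le_add_left (conv p hdpt) 1
          _ ≤ (j : ℕ∞) + 1 := add_le_add_left hdp 1
          _ ≤ (n : ℕ∞) := by
              have : j + 1 ≤ n := hkn
              exact_mod_cast this
  · -- hdist v ≤ LHS
    refine le_iInf fun p => ?_
    by_cases hpv : E p v
    · rw [hw1 p v hpv]
      exact le_trans (relax p v hpv) (add_le_add_left (lowb t p) 1)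
    · simp [hwtop p v hpv]
end

section
/- Connected-components correctness via min-label propagation: for every t ≥ Fintype.card V and every v : V, H^[t] ℓ v = ⨅ (u : V) (h : G.Reachable v u), ℓ u, i.e., after at most card V synchronous iterations every vertex holds the minimum initial label over its connected component. -/
open scoped ENNReal

private lemma min_label_key
    {V : Type*} (G : SimpleGraph V) (ℓ : V → ℝ≥0∞)
    (H : (V → ℝ≥0∞) → (V → ℝ≥0∞))
    (hH : ∀ (d : V → ℝ≥0∞) (v : V),
      H d v = d v ⊓ ⨅ (u : V) (_ : G.Adj v u), d u) :
    ∀ t : ℕ, ∀ v : V,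
      H^[t] ℓ v = ⨅ (u : V) (_ : ∃ p : G.Walk v u, p.length ≤ t), ℓ u := by
  intro t
  induction t with
  | zero =>
    intro v
    simp only [Function.iterate_zero, id_eq]
    apply le_antisymm
    · refine le_iInf fun u => le_iInf fun hu => ?_
      obtain ⟨p, hp⟩ := hu
      have : v = u := p.eq_of_length_eq_zero (Nat.le_zero.mp hp)
      subst this; rfl
    · exact iInf_le_of_le v (iInf_le_of_le ⟨SimpleGraph.Walk.nil, by simp⟩ le_rfl)
  | succ t ih =>
    intro v
    rw [Function.iterate_succ_apply', hH]
    simp only [ih]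
    apply le_antisymm
    · refine le_iInf fun u => le_iInf fun hu => ?_
      obtain ⟨p, hp⟩ := hu
      cases p with
      | nil =>
        exact inf_le_left.trans
          (iInf_le_of_le v (iInf_le_of_le ⟨SimpleGraph.Walk.nil, Nat.zero_le _⟩ le_rfl))
      | cons h q =>
        refine inf_le_right.trans ?_
        refine iInf_le_of_le _ (iInf_le_of_le h ?_)
        refine iInf_le_of_le u (iInf_le_of_le ⟨q, ?_⟩ le_rfl)
        simpa [SimpleGraph.Walk.length_cons] using hp
    · refine le_inf ?_ ?_
      · refine le_iInf fun u => le_iInf fun hu => ?_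
        obtain ⟨p, hp⟩ := hu
        exact iInf_le_of_le u (iInf_le_of_le ⟨p, hp.trans (Nat.le_succ t)⟩ le_rfl)
      · refine le_iInf fun w => le_iInf fun hadj => le_iInf fun u => le_iInf fun hu => ?_
        obtain ⟨q, hq⟩ := hu
        refine iInf_le_of_le u (iInf_le_of_le ⟨SimpleGraph.Walk.cons hadj q, ?_⟩ le_rfl)
        simpa [SimpleGraph.Walk.length_cons] using hq

/-- Connected-components correctness via min-label propagation: after at most
`Fintype.card V` synchronous iterations of the min-label propagation operator,
every vertex holds the minimum initial label over its connected component. -/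
theorem min_label_propagation_correct
    {V : Type*} [Fintype V] (G : SimpleGraph V) (ℓ : V → ℝ≥0∞)
    (H : (V → ℝ≥0∞) → (V → ℝ≥0∞))
    (hH : ∀ (d : V → ℝ≥0∞) (v : V),
      H d v = d v ⊓ ⨅ (u : V) (_ : G.Adj v u), d u) :
    ∀ t : ℕ, Fintype.card V ≤ t → ∀ v : V,
      H^[t] ℓ v = ⨅ (u : V) (_ : G.Reachable v u), ℓ u := by
  classical
  intro t ht v
  rw [min_label_key G ℓ H hH t v]
  have hiff : ∀ u : V, (∃ p : G.Walk v u, p.length ≤ t) ↔ G.Reachable v u := by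
    intro u
    constructor
    · rintro ⟨p, -⟩; exact ⟨p⟩
    · intro h
      obtain ⟨p⟩ := h
      exact ⟨p.toPath, le_trans (Nat.le_of_lt p.toPath.prop.length_lt) ht⟩
  exact iInf_congr fun u => by rw [iInf_congr_Prop (hiff u) (fun _ => rfl)]
end

section
/- Delayed connected-components computation converges to the original output: let L : V → ℕ be a schedule and T : ℕ with L v ≤ T for every v, and define the delayed iteration h 0 = ℓ, h (t+1) v = H (h t) v if t ≥ L v and h (t+1) v = h t v otherwise. Then for every t ≥ T + Fintype.card V and every v : V, h t v = ⨅ (u : V) (hr : G.Reachable v u), ℓ u. -/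
open scoped ENNReal

/-- Delayed connected-components computation converges to the original output:
under any schedule bounded by `T`, for every `t ≥ T + Fintype.card V` every
vertex holds the minimum initial label over its connected component. -/
theorem delayed_min_label_propagation_converges
    {V : Type*} [Fintype V] (G : SimpleGraph V) (ℓ : V → ℝ≥0∞)
    (H : (V → ℝ≥0∞) → (V → ℝ≥0∞))
    (hH : ∀ (d : V → ℝ≥0∞) (v : V),
      H d v = d v ⊓ ⨅ (u : V) (_ : G.Adj v u), d u)
    (L : V → ℕ) (T : ℕ) (hL : ∀ v : V, L v ≤ T)
    (h : ℕ → V → ℝ≥0∞) (hh0 : h 0 = ℓ)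
    (hhF : ∀ (t : ℕ) (v : V), L v ≤ t → h (t + 1) v = H (h t) v)
    (hhW : ∀ (t : ℕ) (v : V), t < L v → h (t + 1) v = h t v) :
    ∀ t : ℕ, T + Fintype.card V ≤ t → ∀ v : V,
      h t v = ⨅ (u : V) (_ : G.Reachable v u), ℓ u := by
  classical
  set d : V → ℝ≥0∞ := fun v => ⨅ (u : V) (_ : G.Reachable v u), ℓ u with hd
  have hstep : ∀ t v, h (t + 1) v ≤ h t v := by
    intro t v
    rcases le_or_gt (L v) t with hle | hlt
    · rw [hhF t v hle, hH]; exact inf_le_left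
    · rw [hhW t v hlt]
  have hanti : ∀ v, Antitone fun t => h t v := fun v =>
    antitone_nat_of_succ_le (fun n => hstep n v)
  have hle0 : ∀ t v, h t v ≤ ℓ v := by
    intro t v
    have := hanti v (Nat.zero_le t)
    simpa [hh0] using this
  -- propagation along an edge
  have hprop : ∀ t, T ≤ t → ∀ v u, G.Adj v u → h (t + 1) v ≤ h t u := by
    intro t ht v u hadj
    rw [hhF t v ((hL v).trans ht), hH]
    exact inf_le_right.trans (iInf₂_le u hadj)
  -- propagation along a walk
  have hwalk : ∀ (v u : V) (p : G.Walk v u) (t : ℕ), T + p.length ≤ t →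
      h t v ≤ ℓ u := by
    intro v u p
    induction p with
    | nil => intro t _; exact hle0 t _
    | cons hadj q ih =>
      intro t ht
      rcases t with _ | s
      · simp [SimpleGraph.Walk.length_cons] at ht
      · have hs : T + q.length ≤ s := by
          simp [SimpleGraph.Walk.length_cons] at ht; omega
        exact (hprop s (le_trans (Nat.le_add_right _ _) hs) _ _ hadj).trans
          (ih s hs)
  -- lower bound invariant
  have hlow : ∀ t v, d v ≤ h t v := by
    intro t
    induction t with
    | zero => intro v; rw [hh0]; exact iInf₂_le v (SimpleGraph.Reachable.refl v)
    | succ n ih =>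
      intro v
      rcases le_or_gt (L v) n with hle | hlt
      · rw [hhF n v hle, hH]
        refine le_inf (ih v) (le_iInf₂ fun u hadj => ?_)
        refine le_trans ?_ (ih u)
        exact le_iInf₂ fun w hw => iInf₂_le w (hadj.reachable.trans hw)
      · rw [hhW n v hlt]; exact ih v
  intro t ht v
  refine le_antisymm ?_ (hlow t v)
  refine le_iInf₂ fun u hr => ?_
  obtain ⟨p⟩ := hr
  have hp := p.toPath
  have hlen : (p.toPath : G.Walk v u).length < Fintype.card V :=
    SimpleGraph.Walk.IsPath.length_lt p.toPath.2
  exact hwalk v u p.toPath (t) (by omega)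
end

section
/- Widest-path (max-min aggregation) correctness: for every t ≥ Fintype.card V and every v : V, W^[t] c₀ v = the supremum, over all walks from s to v, of their bottleneck capacity; i.e., the synchronous max-min iteration stabilizes after at most card V iterations at the widest-path values. -/
open scoped ENNReal

set_option linter.unusedSectionVars false

section WPAux
variable {V : Type*} [Fintype V]

/-- Supremum of bottleneck capacities over walks of length `k` from `s` to `v`,
with walks given as functions `ℕ → V`. -/
noncomputable def wpA (s : V) (w : V → V → ℝ≥0∞) (k : ℕ) (v : V) : ℝ≥0∞ :=
  ⨆ (x : ℕ → V) (_ : x 0 = s) (_ : x k = v), ⨅ i : Fin k, w (x i.val) (x (i.val + 1))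

lemma wpA_iInf_split {α : Type*} [CompleteLattice α] (k : ℕ) (f : ℕ → α) :
    (⨅ i : Fin (k + 1), f i.val) = (⨅ i : Fin k, f i.val) ⊓ f k := by
  apply le_antisymm
  · exact le_inf (le_iInf fun i => iInf_le _ (⟨i.val, by omega⟩ : Fin (k + 1))) (iInf_le _ (⟨k, by omega⟩ : Fin (k + 1)))
  · refine le_iInf fun i => ?_
    rcases lt_or_eq_of_le (Nat.lt_succ_iff.mp i.isLt) with h | h
    · exact inf_le_left.trans (iInf_le _ (⟨i.val, h⟩ : Fin k))
    · rw [h]; exact inf_le_right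

lemma wpA_succ (s : V) (w : V → V → ℝ≥0∞) (k : ℕ) (v : V) :
    wpA s w (k + 1) v = ⨆ u : V, (wpA s w k u ⊓ w u v) := by
  apply le_antisymm
  · refine iSup_le fun x => iSup_le fun hx0 => iSup_le fun hxk => ?_
    rw [wpA_iInf_split k (fun n => w (x n) (x (n+1)))]
    refine le_iSup_of_le (x k) (inf_le_inf ?_ ?_)
    · exact le_iSup_of_le x (le_iSup_of_le hx0 (le_iSup_of_le rfl le_rfl))
    · rw [hxk]
  · refine iSup_le fun u => ?_
    rw [wpA, iSup_inf_eq]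
    refine iSup_le fun x => ?_
    rw [iSup_inf_eq]
    refine iSup_le fun hx0 => ?_
    rw [iSup_inf_eq]
    refine iSup_le fun hxk => ?_
    set y : ℕ → V := fun n => if n = k + 1 then v else x n with hy
    have hyx : ∀ n, n ≤ k → y n = x n := by
      intro n hn; simp only [hy]; rw [if_neg (by omega)]
    refine le_iSup_of_le y (le_iSup_of_le (by rw [hyx 0 (by omega), hx0])
      (le_iSup_of_le (by simp [hy]) ?_))
    rw [wpA_iInf_split k (fun n => w (y n) (y (n+1)))]
    refine inf_le_inf ?_ ?_
    · refine le_iInf fun i => (iInf_le _ i).trans ?_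
      rw [hyx i.val (by omega), hyx (i.val+1) (by omega)]
    · rw [hyx k (by omega), hxk]; simp [hy]

lemma wpA_self (s : V) (w : V → V → ℝ≥0∞) : wpA s w 0 s = ⊤ := by
  apply top_unique
  refine le_iSup_of_le (fun _ => s) (le_iSup_of_le rfl (le_iSup_of_le rfl ?_))
  simp

lemma wpA_zero (s : V) (w : V → V → ℝ≥0∞) (v : V) (hv : v ≠ s) : wpA s w 0 v = 0 := by
  refine le_antisymm (iSup_le fun x => iSup_le fun hx0 => iSup_le fun hxk => ?_) zero_le
  exact absurd (hxk ▸ hx0) hv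

lemma wpIter (s : V) (w : V → V → ℝ≥0∞) (W : (V → ℝ≥0∞) → (V → ℝ≥0∞))
    (hWs : ∀ d : V → ℝ≥0∞, W d s = ⊤)
    (hWne : ∀ (d : V → ℝ≥0∞) (v : V), v ≠ s → W d v = ⨆ u : V, (d u ⊓ w u v))
    (c₀ : V → ℝ≥0∞) (hc₀s : c₀ s = ⊤) (hc₀ : ∀ v : V, v ≠ s → c₀ v = 0) :
    ∀ t : ℕ, ∀ v : V, W^[t] c₀ v = ⨆ (k : ℕ) (_ : k ≤ t), wpA s w k v := by
  intro t
  induction t with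
  | zero =>
    intro v
    simp only [Function.iterate_zero, id_eq]
    by_cases hv : v = s
    · rw [hv]
      rw [hc₀s]
      refine (top_unique ?_).symm
      exact le_iSup₂_of_le 0 le_rfl (wpA_self s w).ge
    · rw [hc₀ v hv]
      refine (le_antisymm ?_ zero_le).symm
      refine iSup_le fun k => iSup_le fun hk => ?_
      interval_cases k
      exact (wpA_zero s w v hv).le
  | succ t ih =>
    intro v
    rw [Function.iterate_succ_apply']
    by_cases hv : v = s
    · rw [hv]
      rw [hWs]
      refine (top_unique ?_).symm
      exact le_iSup₂_of_le 0 (by omega) (wpA_self s w).ge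
    · rw [hWne _ v hv]
      have key : ∀ u, W^[t] c₀ u ⊓ w u v = ⨆ (k : ℕ) (_ : k ≤ t), (wpA s w k u ⊓ w u v) := by
        intro u
        rw [ih u, iSup_inf_eq]
        refine iSup_congr fun k => ?_
        rw [iSup_inf_eq]
      simp only [key]
      rw [iSup_comm]
      apply le_antisymm
      · refine iSup_le fun k => ?_
        rw [iSup_comm]
        refine iSup_le fun hk => ?_
        rw [← wpA_succ]
        exact le_iSup_of_le (k+1) (le_iSup_of_le (by omega) le_rfl)
      · refine iSup_le fun k => iSup_le fun hk => ?_
        match k, hk with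
        | 0, _ =>
          rw [wpA_zero s w v hv]; exact zero_le
        | (k+1), hk =>
          rw [wpA_succ]
          refine iSup_le fun u => le_iSup_of_le k ?_
          rw [iSup_comm]
          exact le_iSup_of_le (by omega) (le_iSup_of_le u le_rfl)

lemma wpShorten (s : V) (w : V → V → ℝ≥0∞) (t : ℕ) (ht : Fintype.card V ≤ t) (v : V) :
    ∀ (k : ℕ) (x : ℕ → V), x 0 = s → x k = v →
      (⨅ i : Fin k, w (x i.val) (x (i.val + 1))) ≤ ⨆ (k' : ℕ) (_ : k' ≤ t), wpA s w k' v := by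
  intro k
  induction k using Nat.strong_induction_on with
  | _ k ih =>
    intro x hx0 hxk
    by_cases hk : k ≤ t
    · exact le_iSup₂_of_le k hk (le_iSup₂_of_le x hx0 (le_iSup_of_le hxk le_rfl))
    · have hcard : Fintype.card V < Fintype.card (Fin (k + 1)) := by
        rw [Fintype.card_fin]; omega
      obtain ⟨a, b, hab, heq⟩ :=
        Fintype.exists_ne_map_eq_of_card_lt (fun i : Fin (k + 1) => x i.val) hcard
      obtain ⟨i, j, hij, hjk, hxij⟩ : ∃ i j : ℕ, i < j ∧ j ≤ k ∧ x i = x j := by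
        rcases Ne.lt_or_gt (fun h => hab (Fin.ext (by exact_mod_cast congrArg Fin.val h))) with h | h
        · exact ⟨a.val, b.val, by exact_mod_cast h, by omega, heq⟩
        · exact ⟨b.val, a.val, by exact_mod_cast h, by omega, heq.symm⟩
      set d : ℕ := j - i with hd
      have hd0 : 0 < d := by omega
      set k' : ℕ := k - d with hk'
      have hk'lt : k' < k := by omega
      set y : ℕ → V := fun n => if n ≤ i then x n else x (n + d) with hy
      have hy0 : y 0 = s := by simp only [hy]; rw [if_pos (Nat.zero_le _)]; exact hx0
      have hyk : y k' = v := by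
        simp only [hy]
        by_cases h : k' ≤ i
        · have hik : i = k' := by omega
          have hjk' : j = k := by omega
          rw [if_pos h, ← hik, hxij, hjk', hxk]
        · rw [if_neg h]
          have : k' + d = k := by omega
          rw [this, hxk]
      have hbot : (⨅ m : Fin k, w (x m.val) (x (m.val + 1)))
          ≤ ⨅ m : Fin k', w (y m.val) (y (m.val + 1)) := by
        refine le_iInf fun m => ?_
        have hm : m.val < k' := m.isLt
        by_cases h1 : m.val + 1 ≤ i
        · have e1 : y m.val = x m.val := by simp only [hy]; rw [if_pos (by omega)]
          have e2 : y (m.val + 1) = x (m.val + 1) := by simp only [hy]; rw [if_pos h1]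
          rw [e1, e2]
          exact iInf_le _ (⟨m.val, by omega⟩ : Fin k)
        · by_cases h2 : m.val ≤ i
          · have hmi : m.val = i := by omega
            have e1 : y m.val = x j := by simp only [hy]; rw [if_pos h2, hmi, hxij]
            have e2 : y (m.val + 1) = x (j + 1) := by
              simp only [hy]; rw [if_neg h1]
              congr 1; omega
            rw [e1, e2]
            have hjlt : j < k := by omega
            exact iInf_le _ (⟨j, hjlt⟩ : Fin k)
          · have e1 : y m.val = x (m.val + d) := by simp only [hy]; rw [if_neg h2]
            have e2 : y (m.val + 1) = x (m.val + d + 1) := by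
              simp only [hy]; rw [if_neg (by omega)]
              congr 1; omega
            rw [e1, e2]
            exact iInf_le _ (⟨m.val + d, by omega⟩ : Fin k)
      exact hbot.trans (ih k' hk'lt y hy0 hyk)

lemma wpConv (s : V) (w : V → V → ℝ≥0∞) (v : V) :
    (⨆ (k : ℕ), wpA s w k v) =
      ⨆ (k : ℕ) (x : Fin (k + 1) → V) (_ : x 0 = s) (_ : x (Fin.last k) = v),
        ⨅ i : Fin k, w (x i.castSucc) (x i.succ) := by
  apply le_antisymm
  · refine iSup_le fun k => iSup_le fun x => iSup_le fun hx0 => iSup_le fun hxk => ?_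
    refine le_iSup_of_le k ?_
    set z : Fin (k + 1) → V := fun i => x i.val with hz
    refine le_iSup_of_le z (le_iSup_of_le (by simp [hz, hx0]) (le_iSup_of_le
      (by simp [hz, Fin.last, hxk]) ?_))
    refine le_iInf fun i => (iInf_le _ i).trans ?_
    simp [hz, Fin.castSucc, Fin.succ]
  · refine iSup_le fun k => iSup_le fun x => iSup_le fun hx0 => iSup_le fun hxk => ?_
    refine le_iSup_of_le k ?_
    set z : ℕ → V := fun n => x ⟨min n k, by omega⟩ with hz
    have hzn : ∀ n : ℕ, ∀ _hn : n ≤ k, z n = x ⟨n, by omega⟩ := by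
      intro n hn; simp only [hz]
      congr 1; exact Fin.ext (by simp [Nat.min_eq_left hn])
    refine le_iSup_of_le z (le_iSup_of_le ?_ (le_iSup_of_le ?_ ?_))
    · rw [hzn 0 (by omega)]; exact hx0
    · rw [hzn k le_rfl]; rw [← hxk]; congr 1
    · refine le_iInf fun i => (iInf_le _ i).trans ?_
      rw [hzn i.val (by omega), hzn (i.val + 1) (by omega)]
      have e1 : (⟨i.val, by omega⟩ : Fin (k+1)) = i.castSucc := Fin.ext (by simp)
      have e2 : (⟨i.val + 1, by omega⟩ : Fin (k+1)) = i.succ := Fin.ext (by simp)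
      rw [e1, e2]

end WPAux

/-- Widest-path (max-min aggregation) correctness: for every
`t ≥ Fintype.card V` and every vertex `v`, the `t`-th iterate of the
widest-path pull operator equals the supremum over all walks from `s` to `v`
of their bottleneck capacity. -/
theorem widest_path_correct
    {V : Type*} [Fintype V] (s : V) (w : V → V → ℝ≥0∞)
    (W : (V → ℝ≥0∞) → (V → ℝ≥0∞))
    (hWs : ∀ d : V → ℝ≥0∞, W d s = ⊤)
    (hWne : ∀ (d : V → ℝ≥0∞) (v : V), v ≠ s → W d v = ⨆ u : V, (d u ⊓ w u v))
    (c₀ : V → ℝ≥0∞) (hc₀s : c₀ s = ⊤) (hc₀ : ∀ v : V, v ≠ s → c₀ v = 0) :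
    ∀ t : ℕ, Fintype.card V ≤ t → ∀ v : V,
      W^[t] c₀ v =
        ⨆ (k : ℕ) (x : Fin (k + 1) → V) (_ : x 0 = s) (_ : x (Fin.last k) = v),
          ⨅ i : Fin k, w (x i.castSucc) (x i.succ) := by
  intro t ht v
  rw [wpIter s w W hWs hWne c₀ hc₀s hc₀ t v, ← wpConv s w v]
  apply le_antisymm
  · exact iSup_le fun k => iSup_le fun _ => le_iSup (fun k => wpA s w k v) k
  · refine iSup_le fun k => ?_
    rw [wpA]
    refine iSup_le fun x => iSup_le fun hx0 => iSup_le fun hxk => ?_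
    exact wpShorten s w t ht v k x hx0 hxk
end
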